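/- Let q = 2^r with r a positive integer and let β ∈ 𝔽_q. Then the number of w ∈ SO⁺(2,q) with matrix trace Tr w = β equals 1 if β = 0; equals 2 if β ≠ 0 and tr(β^{−1}) = 0; and equals 0 if β ≠ 0 and tr(β^{−1}) = 1. -/

import Mathlib

open Finset Matrix

/-- The quadratic form `θ⁺(x) = ∑ i, x_i x_{n+i}` on `F^{2n}` (columns indexed by `Fin n ⊕ Fin n`). -/
def thetaPlus (F : Type) [Field F] (n : ℕ) (x : Fin n ⊕ Fin n → F) : F :=
  ∑ i : Fin n, x (Sum.inl i) * x (Sum.inr i)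

/-- The orthogonal group `O⁺(2n,q)`: invertible matrices preserving `θ⁺`. -/
noncomputable def OplusGrp (F : Type) [Field F] [Fintype F] [DecidableEq F] (n : ℕ) :
    Finset (Matrix (Fin n ⊕ Fin n) (Fin n ⊕ Fin n) F) := by
  classical
  exact Finset.univ.filter (fun w => IsUnit w ∧
    ∀ x : Fin n ⊕ Fin n → F, thetaPlus F n (w.mulVec x) = thetaPlus F n x)

/-- `SO⁺(2n,q)`: the kernel of `δ⁺(w) = Tr(B ᵗC)` on `O⁺(2n,q)`,
where `w = [[A,B],[C,D]]` in `n × n` blocks. -/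
noncomputable def SOplusGrp (F : Type) [Field F] [Fintype F] [DecidableEq F] (n : ℕ) :
    Finset (Matrix (Fin n ⊕ Fin n) (Fin n ⊕ Fin n) F) := by
  classical
  exact (OplusGrp F n).filter
    (fun w => Matrix.trace (Matrix.toBlocks₁₂ w * (Matrix.toBlocks₂₁ w)ᵀ) = 0)

/-- The trace map `tr(x) = x + x² + ⋯ + x^{2^{r−1}}`, valued in `𝔽₂ = {0,1} ⊆ F`. -/
def trF (F : Type) [Field F] (r : ℕ) (x : F) : F := ∑ i ∈ Finset.range r, x ^ 2 ^ i

/-- The canonical additive character `λ(x) = (−1)^{tr(x)} ∈ {±1} ⊆ ℤ`. -/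
noncomputable def lam (F : Type) [Field F] (r : ℕ) (x : F) : ℤ := by
  classical exact if trF F r x = 0 then 1 else -1

/-- The trace map `tr` viewed as a function into `𝔽₂ = ZMod 2`. -/
noncomputable def tr2 (F : Type) [Field F] (r : ℕ) (x : F) : ZMod 2 := by
  classical exact if trF F r x = 0 then 0 else 1

/-- The Kloosterman sum `K(λ;a) = ∑_{α ∈ F*} λ(α + aα⁻¹)`. -/
noncomputable def Kl (F : Type) [Field F] [Fintype F] (r : ℕ) (a : F) : ℤ := by
  classical
  exact ∑ α ∈ Finset.univ.filter (fun α : F => α ≠ 0), lam F r (α + a * α⁻¹)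

/-- The `m`-dimensional Kloosterman sum
`K_m(λ;a) = ∑_{α₁,…,α_m ∈ F*} λ(α₁ + ⋯ + α_m + aα₁⁻¹⋯α_m⁻¹)`;
for `m = 0` this is `K₀(λ;a) = λ(a)`. -/
noncomputable def Klm (F : Type) [Field F] [Fintype F] (r m : ℕ) (a : F) : ℤ := by
  classical
  exact ∑ v ∈ Finset.univ.filter (fun v : Fin m → F => ∀ i, v i ≠ 0),
    lam F r ((∑ i, v i) + a * (∏ i, v i)⁻¹)

/-- The power moment `MK^h = ∑_{a ∈ F*} K(λ;a)^h`. -/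
noncomputable def MK (F : Type) [Field F] [Fintype F] (r h : ℕ) : ℤ := by
  classical exact ∑ a ∈ Finset.univ.filter (fun a : F => a ≠ 0), (Kl F r a) ^ h

/-- The power moment `MK₂^h = ∑_{a ∈ F*} K₂(λ;a)^h` of 2-dimensional Kloosterman sums. -/
noncomputable def MK2 (F : Type) [Field F] [Fintype F] (r h : ℕ) : ℤ := by
  classical exact ∑ a ∈ Finset.univ.filter (fun a : F => a ≠ 0), (Klm F r 2 a) ^ h

/-- The binary code `C(G) = {u ∈ 𝔽₂^G : ∑_{g ∈ G} u_g Tr(g) = 0 in F}`. -/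
noncomputable def code (F : Type) [Field F] [Fintype F] [DecidableEq F]
    {ι : Type} [Fintype ι] [DecidableEq ι] (G : Finset (Matrix ι ι F)) :
    Finset (↥G → ZMod 2) := by
  classical
  exact Finset.univ.filter
    (fun u => ∑ g : ↥G, (u g).val • Matrix.trace (g : Matrix ι ι F) = 0)

/-- Number of codewords of Hamming weight `j` in the code `C(G)`. -/
noncomputable def wtCount (F : Type) [Field F] [Fintype F] [DecidableEq F]
    {ι : Type} [Fintype ι] [DecidableEq ι] (G : Finset (Matrix ι ι F)) (j : ℕ) : ℕ := by
  classical
  exact ((code F G).filter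
    (fun u => (Finset.univ.filter (fun g : ↥G => u g = 1)).card = j)).card

/-- `t! · S(h,t)` where `S(h,t)` is the Stirling number of the second kind,
`S(h,t) = (1/t!) ∑_{j=0}^{t} (−1)^{t−j} C(t,j) j^h`. -/
def tS (h t : ℕ) : ℤ :=
  ∑ j ∈ Finset.range (t + 1), (-1 : ℤ) ^ (t - j) * (t.choose j : ℤ) * (j : ℤ) ^ h

/-- Binomial coefficient with integer arguments: `0` whenever `k < 0` or `k > n`. -/
def ichoose (n k : ℤ) : ℤ := if 0 ≤ k ∧ k ≤ n then (n.toNat.choose k.toNat : ℤ) else 0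

/-!
`SO⁺(2,q)` consists of the matrices `diag(a, a⁻¹)`, `a ≠ 0`, whose trace is `a + a⁻¹`, so one counts
the roots of `a² + βa + 1`. For `β = 0` this is `(a + 1)²` in characteristic 2. For `β ≠ 0` the
substitution `a = βt` gives `t² + t = β⁻²`. The additive map `t ↦ t² + t` has kernel `{0, 1}` and
lands in `ker tr`, which has at most `q/2` elements (roots of a polynomial of degree `2^(r-1)`);
hence its image is exactly `ker tr`, and `tr(β⁻²) = tr(β⁻¹)`.
-/

section Trace

open Polynomial

variable {F : Type} [Field F] {r : ℕ}

lemma charP_two_of_card_eq_two_pow [Fintype F] (hF : Fintype.card F = 2 ^ r) : CharP F 2 := by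
  obtain ⟨p, hp, n, hprime, hcard⟩ := FiniteField.card' F
  have hdvd : p ∣ 2 ^ r := hF ▸ hcard ▸ dvd_pow_self p n.ne_zero
  rwa [(Nat.prime_dvd_prime_iff_eq hprime Nat.prime_two).mp (hprime.dvd_of_dvd_pow hdvd)] at hp

lemma trF_add [CharP F 2] (x y : F) : trF F r (x + y) = trF F r x + trF F r y := by
  simp only [trF, ← Finset.sum_add_distrib, add_pow_char_pow]

lemma trF_pow_two [Fintype F] (hF : Fintype.card F = 2 ^ r) (x : F) :
    trF F r (x ^ 2) = trF F r x := by
  have hx : x ^ 2 ^ r = x := hF ▸ FiniteField.pow_card x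
  -- both sides of `h` are `∑_{i ≤ r} x ^ 2 ^ i`, split off at the two ends
  have h := (Finset.sum_range_succ' (fun i => x ^ 2 ^ i) r).symm.trans
    (Finset.sum_range_succ (fun i => x ^ 2 ^ i) r)
  simp only [pow_zero, pow_one, hx] at h
  simp only [trF, ← pow_mul, ← pow_succ']
  exact add_right_cancel h

lemma trF_sq_add_self [CharP F 2] [Fintype F] (hF : Fintype.card F = 2 ^ r) (t : F) :
    trF F r (t ^ 2 + t) = 0 := by
  rw [trF_add, trF_pow_two hF, CharTwo.add_self_eq_zero]

lemma ncard_trF_eq_zero_le (hr : r ≠ 0) : {x : F | trF F r x = 0}.ncard ≤ 2 ^ (r - 1) := by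
  classical
  set P : F[X] := ∑ i ∈ range r, X ^ 2 ^ i
  have hP : P ≠ 0 := by
    intro h
    have : P.coeff 1 = 1 := by
      simp [P, finsetSum_coeff, coeff_X_pow, @eq_comm _ 1,
        Nat.pos_of_ne_zero hr]
    simp [h] at this
  have hsub : {x : F | trF F r x = 0} ⊆ P.roots.toFinset := fun x hx => by
    simpa [mem_roots hP, P, eval_finsetSum, trF] using hx
  calc {x : F | trF F r x = 0}.ncard
      ≤ P.roots.toFinset.card := by
        simpa using Set.ncard_le_ncard hsub (Finset.finite_toSet _)
    _ ≤ P.natDegree := (Multiset.toFinset_card_le _).trans (card_roots' P)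
    _ ≤ 2 ^ (r - 1) := natDegree_sum_le_of_forall_le _ _ fun i hi => by
        rw [natDegree_X_pow]
        exact Nat.pow_le_pow_right two_pos (by simp at hi; omega)

end Trace

section CharTwo

variable {F : Type} [Field F] [CharP F 2] {r : ℕ}

lemma sq_add_self_eq_iff {t₀ c : F} (h₀ : t₀ ^ 2 + t₀ = c) (t : F) :
    t ^ 2 + t = c ↔ t = t₀ ∨ t = t₀ + 1 := by
  have h2 : (2 : F) = 0 := CharTwo.two_eq_zero
  have hfac : t ^ 2 + t + c = (t + t₀) * (t + (t₀ + 1)) := by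
    linear_combination -h₀ - t * t₀ * h2
  rw [← CharTwo.add_eq_zero, hfac, mul_eq_zero, CharTwo.add_eq_zero, CharTwo.add_eq_zero]

lemma ne_zero_and_add_inv_eq_iff (a β : F) : a ≠ 0 ∧ a + a⁻¹ = β ↔ a ^ 2 + β * a + 1 = 0 := by
  have h2 : (2 : F) = 0 := CharTwo.two_eq_zero
  constructor
  · rintro ⟨ha, h⟩
    field_simp at h
    linear_combination h + a * β * h2
  · intro h
    have ha : a ≠ 0 := by
      rintro rfl
      simp at h
    refine ⟨ha, ?_⟩
    field_simp
    linear_combination h - a * β * h2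

lemma exists_sq_add_self_eq [Fintype F] (hF : Fintype.card F = 2 ^ r) {c : F}
    (hc : trF F r c = 0) : ∃ t, t ^ 2 + t = c := by
  have hr : r ≠ 0 := by
    rintro rfl
    simpa [hF] using Fintype.one_lt_card (α := F)
  let tr : F →+ F := AddMonoidHom.mk' (trF F r) trF_add
  let f : F →+ tr.ker := AddMonoidHom.codRestrict
    (AddMonoidHom.mk' (fun t => t ^ 2 + t) fun x y => by rw [CharTwo.add_sq]; abel)
    tr.ker fun t => by simpa [tr] using trF_sq_add_self hF t
  have hker : Nat.card f.ker ≤ 2 := by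
    have hsub : (f.ker : Set F) ⊆ {0, 1} := fun t ht => by
      have ht' : t ^ 2 + t = 0 := congrArg Subtype.val (AddMonoidHom.mem_ker.mp ht)
      simpa using (sq_add_self_eq_iff (t₀ := 0) (by ring) t).mp ht'
    calc Nat.card f.ker = (f.ker : Set F).ncard := Nat.card_coe_set_eq _
      _ ≤ ({0, 1} : Set F).ncard := Set.ncard_le_ncard hsub
      _ = 2 := Set.ncard_pair zero_ne_one
  have htr : 2 * Nat.card tr.ker ≤ Nat.card F :=
    calc 2 * Nat.card tr.ker = 2 * {x : F | trF F r x = 0}.ncard := by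
          rw [← Nat.card_coe_set_eq]; rfl
      _ ≤ 2 * 2 ^ (r - 1) := Nat.mul_le_mul_left 2 (ncard_trF_eq_zero_le hr)
      _ = Nat.card F := by
          rw [Nat.card_eq_fintype_card, hF, ← pow_succ', Nat.sub_add_cancel (by omega)]
  obtain ⟨t, ht⟩ := f.surjective_of_card_ker_le_div
    (hker.trans <| (Nat.le_div_iff_mul_le Nat.card_pos).mpr htr) ⟨c, AddMonoidHom.mem_ker.mpr hc⟩
  exact ⟨t, congrArg Subtype.val ht⟩

variable [Fintype F] [DecidableEq F]

lemma card_filter_sq_add_self_eq (hF : Fintype.card F = 2 ^ r) (c : F) :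
    #{t : F | t ^ 2 + t = c} = if trF F r c = 0 then 2 else 0 := by
  split_ifs with hc
  · obtain ⟨t₀, h₀⟩ := exists_sq_add_self_eq hF hc
    have hsol : ({t : F | t ^ 2 + t = c} : Finset F) = {t₀, t₀ + 1} := by
      ext t
      simp [sq_add_self_eq_iff h₀]
    rw [hsol, card_pair (by simp)]
  · refine card_eq_zero.mpr (filter_eq_empty_iff.mpr fun t _ ht => hc ?_)
    rw [← ht, trF_sq_add_self hF]

lemma filter_add_inv_eq_zero : ({a : F | a ≠ 0 ∧ a + a⁻¹ = 0} : Finset F) = {1} := by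
  ext a
  simp only [mem_filter, mem_univ, true_and, mem_singleton, ne_zero_and_add_inv_eq_iff,
    zero_mul, add_zero]
  rw [show a ^ 2 + 1 = (a + 1) ^ 2 by rw [CharTwo.add_sq, one_pow], pow_eq_zero_iff two_ne_zero,
    CharTwo.add_eq_zero]

lemma card_filter_add_inv_eq {β : F} (hβ : β ≠ 0) :
    #{a : F | a ≠ 0 ∧ a + a⁻¹ = β} = #{t : F | t ^ 2 + t = β⁻¹ ^ 2} := by
  have key : ∀ t, (β * t) ^ 2 + β * (β * t) + 1 = 0 ↔ t ^ 2 + t = β⁻¹ ^ 2 := fun t => by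
    have hfac : (β * t) ^ 2 + β * (β * t) + 1 = β ^ 2 * (t ^ 2 + t + β⁻¹ ^ 2) := by
      field_simp
    rw [hfac, mul_eq_zero, or_iff_right (pow_ne_zero 2 hβ), CharTwo.add_eq_zero]
  refine card_nbij' (β⁻¹ * ·) (β * ·) (fun a ha => ?_) (fun t ht => ?_)
    (fun a _ => mul_inv_cancel_left₀ hβ a) (fun t _ => inv_mul_cancel_left₀ hβ t)
  · rw [mem_coe, mem_filter_univ, ← key, mul_inv_cancel_left₀ hβ]
    exact (ne_zero_and_add_inv_eq_iff a β).mp ((mem_filter_univ a).mp ha)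
  · rw [mem_coe, mem_filter_univ, ne_zero_and_add_inv_eq_iff]
    exact (key t).mpr ((mem_filter_univ t).mp ht)

end CharTwo

section SplitTorus

variable {F : Type} [Field F]

def splitTorus (a : F) : Matrix (Fin 1 ⊕ Fin 1) (Fin 1 ⊕ Fin 1) F :=
  diagonal (Sum.elim (fun _ => a) fun _ => a⁻¹)

lemma trace_splitTorus (a : F) : trace (splitTorus a) = a + a⁻¹ := by
  simp [splitTorus, trace, Fintype.sum_sum_type]

lemma splitTorus_injective : Function.Injective (splitTorus (F := F)) := fun a b h => by
  simpa [splitTorus] using congrFun (congrFun h (Sum.inl 0)) (Sum.inl 0)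

lemma thetaPlus_one (x : Fin 1 ⊕ Fin 1 → F) : thetaPlus F 1 x = x (Sum.inl 0) * x (Sum.inr 0) := by
  simp [thetaPlus]

variable [Fintype F] [DecidableEq F]

lemma splitTorus_mem_SOplusGrp {a : F} (ha : a ≠ 0) : splitTorus a ∈ SOplusGrp F 1 := by
  simp only [SOplusGrp, OplusGrp, mem_filter, mem_univ, true_and]
  refine ⟨⟨isUnit_diagonal.mpr ?_, fun x => ?_⟩, by simp [splitTorus, toBlocks₁₂_diagonal]⟩
  · exact Pi.isUnit_iff.mpr fun i => by rcases i with _ | _ <;> simp [ha]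
  · simp [splitTorus, thetaPlus_one, mulVec_diagonal]
    field_simp

lemma exists_splitTorus_eq_of_mem_SOplusGrp {w : Matrix (Fin 1 ⊕ Fin 1) (Fin 1 ⊕ Fin 1) F}
    (hw : w ∈ SOplusGrp F 1) : ∃ a, a ≠ 0 ∧ splitTorus a = w := by
  simp only [SOplusGrp, OplusGrp, mem_filter, mem_univ, true_and] at hw
  obtain ⟨⟨-, hθ⟩, hδ⟩ := hw
  set a := w (Sum.inl 0) (Sum.inl 0)
  set b := w (Sum.inl 0) (Sum.inr 0)
  set c := w (Sum.inr 0) (Sum.inl 0)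
  set d := w (Sum.inr 0) (Sum.inr 0)
  have key : ∀ s t, (a * s + b * t) * (c * s + d * t) = s * t := fun s t => by
    simpa [thetaPlus_one, mulVec, dotProduct, Fintype.sum_sum_type] using
      hθ (Sum.elim (fun _ => s) fun _ => t)
  have hbc : b * c = 0 := by simpa [trace, toBlocks₁₂, toBlocks₂₁, mul_apply] using hδ
  have hac : a * c = 0 := by simpa using key 1 0
  have hbd : b * d = 0 := by simpa using key 0 1
  have had : a * d = 1 := by linear_combination key 1 1 - hac - hbd - hbc
  have ha : a ≠ 0 := left_ne_zero_of_mul_eq_one had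
  have hd : d ≠ 0 := right_ne_zero_of_mul_eq_one had
  have hb : b = 0 := (mul_eq_zero.mp hbd).resolve_right hd
  have hc : c = 0 := (mul_eq_zero.mp hac).resolve_left ha
  refine ⟨a, ha, ?_⟩
  ext i j
  rcases i with i | i <;> rcases j with j | j <;> fin_cases i <;> fin_cases j
  all_goals simp only [splitTorus, diagonal_apply_eq, diagonal_apply_ne, ne_eq, reduceCtorEq,
    not_false_eq_true, Sum.elim_inl, Sum.elim_inr]
  exacts [rfl, hb.symm, hc.symm, (eq_inv_of_mul_eq_one_right had).symm]

lemma card_filter_trace_SOplusGrp_one (β : F) :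
    #{w ∈ SOplusGrp F 1 | trace w = β} = #{a : F | a ≠ 0 ∧ a + a⁻¹ = β} := by
  rw [← card_image_of_injective _ (splitTorus_injective (F := F))]
  congr 1
  ext w
  simp only [mem_filter, mem_image, mem_univ, true_and]
  constructor
  · rintro ⟨hw, rfl⟩
    obtain ⟨a, ha, rfl⟩ := exists_splitTorus_eq_of_mem_SOplusGrp hw
    exact ⟨a, ⟨ha, (trace_splitTorus a).symm⟩, rfl⟩
  · rintro ⟨a, ⟨ha, rfl⟩, rfl⟩
    exact ⟨splitTorus_mem_SOplusGrp ha, trace_splitTorus a⟩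

end SplitTorus

theorem stmt10_general (r : ℕ) (F : Type) [Field F] [Fintype F] [DecidableEq F]
    (hF : Fintype.card F = 2 ^ r) (β : F) :
    (β = 0 → ((SOplusGrp F 1).filter (fun w => Matrix.trace w = β)).card = 1) ∧
    (β ≠ 0 → trF F r β⁻¹ = 0 →
      ((SOplusGrp F 1).filter (fun w => Matrix.trace w = β)).card = 2) ∧
    (β ≠ 0 → trF F r β⁻¹ = 1 →
      ((SOplusGrp F 1).filter (fun w => Matrix.trace w = β)).card = 0) := by
  have := charP_two_of_card_eq_two_pow hF
  have hcount (hβ : β ≠ 0) : ((SOplusGrp F 1).filter (fun w => Matrix.trace w = β)).card =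
      if trF F r β⁻¹ = 0 then 2 else 0 := by
    rw [card_filter_trace_SOplusGrp_one, card_filter_add_inv_eq hβ,
      card_filter_sq_add_self_eq hF, trF_pow_two hF]
  refine ⟨?_, fun hβ htr => ?_, fun hβ htr => ?_⟩
  · rintro rfl
    rw [card_filter_trace_SOplusGrp_one, filter_add_inv_eq_zero, card_singleton]
  · rw [hcount hβ, if_pos htr]
  · rw [hcount hβ, if_neg (htr ▸ one_ne_zero)]

theorem stmt10 (r : ℕ) (hr : 1 ≤ r) (F : Type) [Field F] [Fintype F] [DecidableEq F]
    (hF : Fintype.card F = 2 ^ r) (β : F) :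
    (β = 0 → ((SOplusGrp F 1).filter (fun w => Matrix.trace w = β)).card = 1) ∧
    (β ≠ 0 → trF F r β⁻¹ = 0 →
      ((SOplusGrp F 1).filter (fun w => Matrix.trace w = β)).card = 2) ∧
    (β ≠ 0 → trF F r β⁻¹ = 1 →
      ((SOplusGrp F 1).filter (fun w => Matrix.trace w = β)).card = 0) :=
  stmt10_general r F hF β
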